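/- Let G be derived from a Burling tree T, let u, v be vertices of G with top-ancestors u', v' respectively, and suppose uv is an arc of G. Then either (i) u' = v', u' ≠ u and v' ≠ v, or (ii) u = u' and uv' is an arc of G. -/
import Mathlib


/-- An oriented graph on vertex type `V`: an irreflexive, asymmetric arc relation. -/
structure OrientedGraph (V : Type) where
  arc : V → V → Prop
  irrefl : ∀ v, ¬ arc v v
  asymm : ∀ u v, arc u v → ¬ arc v u

/-- A Burling tree `(T, root, lastBorn, choose)`.  The tree is encoded by its parent
function (with `parent root = root`); `lastBorn v` is a distinguished child of each
non-leaf `v`; `choose v` is the vertex set of a (possibly empty) branch of the tree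
starting at the last-born of the parent of `v` when `v` is neither the root nor a
last-born, and is empty otherwise. -/
structure BurlingTree (V : Type) where
  root : V
  parent : V → V
  parent_root : parent root = root
  reaches_root : ∀ v, ∃ n, parent^[n] v = root
  lastBorn : V → V
  lastBorn_child : ∀ v w, w ≠ root → parent w = v →
    lastBorn v ≠ root ∧ parent (lastBorn v) = v
  choose : V → Set V
  choose_root : choose root = ∅
  choose_lastBorn : ∀ v, v ≠ root → lastBorn (parent v) = v → choose v = ∅
  choose_branch : ∀ v, v ≠ root → lastBorn (parent v) ≠ v →
    choose v = ∅ ∨ ∃ b, (∃ n, parent^[n] b = lastBorn (parent v)) ∧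
      choose v = {x | (∃ n, parent^[n] x = lastBorn (parent v)) ∧ ∃ n, parent^[n] b = x}

namespace BurlingTree

variable {V : Type} (T : BurlingTree V)

/-- `u` is an ancestor of `v` in `T` (possibly `u = v`). -/
def Anc (u v : V) : Prop := ∃ n, T.parent^[n] v = u

/-- Arc relation of the oriented graph derived from `T` with vertex set `S`
(the induced subgraph, on `S`, of the graph fully derived from `T`). -/
def Arc (S : Set V) (u v : V) : Prop := u ∈ S ∧ v ∈ S ∧ v ∈ T.choose u

/-- Underlying undirected graph of the derived graph on `S`. -/
def UGraph (S : Set V) : SimpleGraph V := SimpleGraph.fromRel (T.Arc S)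

/-- Closed in-neighborhood `N⁻[v]` in the derived graph on `S`. -/
def InNbhd (S : Set V) (v : V) : Set V := insert v {u | T.Arc S u v}

/-- The top-set of the derived graph on `S`: vertices of `S` that are the unique
vertex of `S` on the branch of `T` from the root to them. -/
def TopSet (S : Set V) : Set V := {v | v ∈ S ∧ ∀ x ∈ S, T.Anc x v → x = v}

end BurlingTree

/-- Reachability between `u` and `w` inside the set `A` of vertices of `G`. -/
def ReachIn {V : Type} (G : SimpleGraph V) (A : Set V) (u w : V) : Prop :=
  Relation.ReflTransGen (fun x y => x ∈ A ∧ y ∈ A ∧ G.Adj x y) u w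

/-- `N⁻[v]` is a full in-star cutset of the graph derived from `T` on `S`. -/
def BurlingTree.IsFullInStarCutset {V : Type} (T : BurlingTree V) (S : Set V) (v : V) : Prop :=
  ∃ a ∈ S \ T.InNbhd S v, ∃ b ∈ S \ T.InNbhd S v,
    ¬ ReachIn (T.UGraph S) (S \ T.InNbhd S v) a b

/-- The arc relation `A` is an in-forest: a disjoint union of orientations of rooted
trees with all edges oriented towards the root.  Equivalently: it is irreflexive and
asymmetric, its underlying graph is a forest, every vertex has at most one
out-neighbor, and from every vertex the unique outgoing directed path terminates in
a sink. -/
def IsInForestRel {V : Type} (A : V → V → Prop) : Prop :=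
  (∀ v, ¬ A v v) ∧ (∀ u v, A u v → ¬ A v u) ∧
  (SimpleGraph.fromRel A).IsAcyclic ∧
  (∀ u v w, A u v → A u w → v = w) ∧
  (∀ v, ∃ r, Relation.ReflTransGen A v r ∧ ∀ w, ¬ A r w)

/-- The arc relation `A` forms an in-tree on the vertex set `U`:
an in-forest all of whose vertices in `U` reach a common root. -/
def IsInTreeOn {V : Type} (A : V → V → Prop) (U : Set V) : Prop :=
  IsInForestRel A ∧ ∃ r ∈ U, ∀ v ∈ U, Relation.ReflTransGen A v r

/-- The graph with arc relation `A` and vertex set `U` is an oriented chandelier: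
it is obtained from an in-tree `G'` (on `U` minus an apex `v`) with at least two
leaves by adding the vertex `v` and exactly the arcs from each leaf of `G'` to `v`.
A leaf of the in-tree is a source having exactly one out-neighbor. -/
def ChandelierOn {V : Type} (A : V → V → Prop) (U : Set V) : Prop :=
  ∃ v ∈ U,
    IsInTreeOn (fun a b => A a b ∧ a ≠ v ∧ b ≠ v) (U \ {v}) ∧
    (∀ u, ¬ A v u) ∧
    (∀ u, A u v ↔ (u ∈ U ∧ u ≠ v ∧ (∀ w, ¬ (A w u ∧ w ≠ v ∧ u ≠ v)) ∧
       ∃ w, A u w ∧ w ≠ v ∧ u ≠ v)) ∧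
    (∃ u₁ u₂, u₁ ≠ u₂ ∧ A u₁ v ∧ A u₂ v)

namespace OrientedGraph

variable {V : Type} (G : OrientedGraph V)

/-- Underlying undirected simple graph of an oriented graph. -/
def toSimpleGraph : SimpleGraph V := SimpleGraph.fromRel G.arc

/-- `G` is an in-forest. -/
def IsInForest : Prop := IsInForestRel G.arc

/-- `G` is an oriented chandelier. -/
def IsChandelier : Prop := ChandelierOn G.arc Set.univ

/-- Closed in-neighborhood `N⁻[v]`. -/
def InNbhd (v : V) : Set V := insert v {u | G.arc u v}

/-- `G` has a full in-star cutset: for some vertex `v`, removing `N⁻[v]`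
disconnects the underlying graph. -/
def HasFullInStarCutset : Prop :=
  ∃ v, ∃ a ∈ (G.InNbhd v)ᶜ, ∃ b ∈ (G.InNbhd v)ᶜ,
    ¬ ReachIn G.toSimpleGraph (G.InNbhd v)ᶜ a b

/-- `v` is a cut vertex of `G`: some two vertices distinct from `v` are connected
in the underlying graph but disconnected after removing `v`. -/
def IsCutVertex (v : V) : Prop :=
  ∃ a b, a ≠ v ∧ b ≠ v ∧ G.toSimpleGraph.Reachable a b ∧
    ¬ ReachIn G.toSimpleGraph {v}ᶜ a b

/-- `G` is a `k`-Burling oriented graph: it is isomorphic to a graph derived from a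
Burling tree `T` such that every branch of `T` contains at most `k` vertices of `G`. -/
def IsKBurling (k : ℕ) : Prop :=
  ∃ (W : Type) (T : BurlingTree W) (f : V → W),
    Function.Injective f ∧
    (∀ u v, G.arc u v ↔ T.Arc (Set.range f) (f u) (f v)) ∧
    ∀ b : W, ({x | x ∈ Set.range f ∧ T.Anc x b}).ncard ≤ k

end OrientedGraph

/-- The graph with arc relation `A` on vertex set `U` is (isomorphic to) a graph
derived from some Burling tree. -/
def IsDerivedOn {V : Type} (A : V → V → Prop) (U : Set V) : Prop :=
  ∃ (W : Type) (T : BurlingTree W) (f : V → W),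
    Set.InjOn f U ∧ ∀ a ∈ U, ∀ b ∈ U, (A a b ↔ f b ∈ T.choose (f a))

/-- `C` is a hole of the graph derived from `T` on `S`: an induced cycle of length
at least 4 of the underlying graph (a finite set of at least four vertices whose
induced subgraph is connected and 2-regular). -/
def BurlingTree.IsHole {V : Type} (T : BurlingTree V) (S : Set V) (C : Set V) : Prop :=
  C ⊆ S ∧ C.Finite ∧ 4 ≤ C.ncard ∧
  (∀ x ∈ C, ({y | y ∈ C ∧ (T.UGraph S).Adj x y}).ncard = 2) ∧
  (∀ x ∈ C, ∀ y ∈ C, ReachIn (T.UGraph S) C x y)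

/-- `p` is the pivot of the hole `C`: a sink of the hole both of whose neighbors in
the hole are sources of the hole (the antennas). -/
def BurlingTree.IsPivotOf {V : Type} (T : BurlingTree V) (S : Set V) (C : Set V) (p : V) : Prop :=
  p ∈ C ∧ (∀ w ∈ C, ¬ T.Arc S p w) ∧
  (∀ q ∈ C, (T.UGraph S).Adj p q → ∀ w ∈ C, ¬ T.Arc S w q)

namespace BurlingTree

variable {V : Type} (T : BurlingTree V)

lemma iterate_parent_root (n : ℕ) : T.parent^[n] T.root = T.root := by
  induction n with
  | zero => rfl
  | succ n ih => rw [Function.iterate_succ_apply', ih, T.parent_root]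

lemma cycle_eq_root {u : V} {k : ℕ} (hk : 1 ≤ k) (h : T.parent^[k] u = u) :
    u = T.root := by
  obtain ⟨n, hn⟩ := T.reaches_root u
  have hmul : ∀ m, T.parent^[k * m] u = u := by
    intro m
    induction m with
    | zero => rfl
    | succ m ih => rw [Nat.mul_succ, Function.iterate_add_apply, h, ih]
  have hle : n ≤ k * n := Nat.le_mul_of_pos_left n hk
  have h2 : T.parent^[k * n] u = T.root := by
    rw [show k * n = (k * n - n) + n from (Nat.sub_add_cancel hle).symm,
        Function.iterate_add_apply, hn, T.iterate_parent_root]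
  rw [hmul n] at h2
  exact h2

lemma anc_refl (v : V) : T.Anc v v := ⟨0, rfl⟩

lemma anc_trans {a b c : V} (h1 : T.Anc a b) (h2 : T.Anc b c) : T.Anc a c := by
  obtain ⟨n, hn⟩ := h1; obtain ⟨m, hm⟩ := h2
  exact ⟨n + m, by rw [Function.iterate_add_apply, hm, hn]⟩

lemma anc_total {a b v : V} (h1 : T.Anc a v) (h2 : T.Anc b v) :
    T.Anc a b ∨ T.Anc b a := by
  obtain ⟨m, hm⟩ := h1; obtain ⟨n, hn⟩ := h2
  rcases le_total m n with h | h
  · exact Or.inr ⟨n - m, by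
      rw [← hm, ← Function.iterate_add_apply, Nat.sub_add_cancel h, hn]⟩
  · exact Or.inl ⟨m - n, by
      rw [← hn, ← Function.iterate_add_apply, Nat.sub_add_cancel h, hm]⟩

lemma anc_strict {a b : V} (h : T.Anc a b) (hne : a ≠ b) :
    T.Anc a (T.parent b) := by
  obtain ⟨k, hk⟩ := h
  cases k with
  | zero => exact absurd hk (Ne.symm hne)
  | succ k => exact ⟨k, by rw [← Function.iterate_succ_apply, hk]⟩

lemma anc_parent (b : V) : T.Anc (T.parent b) b := ⟨1, rfl⟩

end BurlingTree

/-- If `u`, `v` are vertices of a derived graph with top-ancestors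
`u'`, `v'` and `uv` is an arc, then either `u' = v'`, `u' ≠ u` and `v' ≠ v`, or
`u = u'` and `uv'` is an arc. -/
theorem stmt10 (V : Type) (T : BurlingTree V) (S : Set V) (u v u' v' : V)
    (hu : u ∈ S) (hv : v ∈ S)
    (hu' : u' ∈ T.TopSet S) (hu'anc : T.Anc u' u)
    (hv' : v' ∈ T.TopSet S) (hv'anc : T.Anc v' v)
    (harc : T.Arc S u v) :
    (u' = v' ∧ u' ≠ u ∧ v' ≠ v) ∨ (u = u' ∧ T.Arc S u v') := by
  obtain ⟨-, -, hvchoose⟩ := harc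
  have huroot : u ≠ T.root := by
    rintro rfl; rw [T.choose_root] at hvchoose; exact hvchoose
  have hLneu : T.lastBorn (T.parent u) ≠ u := by
    intro h; rw [T.choose_lastBorn u huroot h] at hvchoose; exact hvchoose
  rcases T.choose_branch u huroot hLneu with hemp | ⟨b, hb, hch⟩
  · rw [hemp] at hvchoose; exact hvchoose.elim
  obtain ⟨hLroot, hLpar⟩ := T.lastBorn_child (T.parent u) u huroot rfl
  rw [hch] at hvchoose
  obtain ⟨hLv, hvb⟩ := hvchoose
  have hLv : T.Anc (T.lastBorn (T.parent u)) v := hLv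
  have hvb : T.Anc v b := hvb
  have hpuL : T.Anc (T.parent u) (T.lastBorn (T.parent u)) := ⟨1, hLpar⟩
  have hpu_anc_v : T.Anc (T.parent u) v := T.anc_trans hpuL hLv
  by_cases huu : u' = u
  · -- right disjunct
    refine Or.inr ⟨huu.symm, hu, hv'.1, ?_⟩
    rw [hch]
    have hv'b : T.Anc v' b := T.anc_trans hv'anc hvb
    have hLv' : T.Anc (T.lastBorn (T.parent u)) v' := by
      rcases T.anc_total hLv hv'anc with h | h
      · exact h
      · by_cases hvL : v' = T.lastBorn (T.parent u)
        · exact hvL ▸ T.anc_refl v'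
        · have h1 : T.Anc v' (T.parent u) := hLpar ▸ T.anc_strict h hvL
          have h2 : T.Anc v' u := T.anc_trans h1 (T.anc_parent u)
          have h3 : v' = u := huu ▸ hu'.2 v' hv'.1 (huu ▸ h2)
          obtain ⟨k, hk⟩ := h3 ▸ h1
          have : u = T.root := T.cycle_eq_root (Nat.succ_le_succ (Nat.zero_le k))
            (by rw [Function.iterate_succ_apply]; exact hk)
          exact absurd this huroot
    exact ⟨hLv', hv'b⟩
  · -- left disjunct
    have hu'pv : T.Anc u' (T.parent u) := T.anc_strict hu'anc huu
    have hu'v : T.Anc u' v := T.anc_trans hu'pv hpu_anc_v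
    have heq : u' = v' := by
      rcases T.anc_total hu'v hv'anc with h | h
      · exact hv'.2 u' hu'.1 h
      · exact (hu'.2 v' hv'.1 h).symm
    refine Or.inl ⟨heq, huu, ?_⟩
    rintro rfl
    -- now v' = v, so u' = v, and v is a strict ancestor of parent u = parent L
    have hvpu : T.Anc v' (T.parent u) := heq ▸ hu'pv
    have hvpL : T.Anc v' (T.parent (T.lastBorn (T.parent u))) := hLpar.symm ▸ hvpu
    have hLpL : T.Anc (T.lastBorn (T.parent u))
        (T.parent (T.lastBorn (T.parent u))) := T.anc_trans hLv hvpL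
    obtain ⟨k, hk⟩ := hLpL
    have : T.lastBorn (T.parent u) = T.root :=
      T.cycle_eq_root (Nat.succ_le_succ (Nat.zero_le k))
        (by rw [Function.iterate_succ_apply]; exact hk)
    exact absurd this hLroot
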